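/- arXiv:2603.00577 — 5 statements merged into one kernel-verified Lean document; each statement's English description precedes it below -/
import Mathlib

section
/- Let z1, z2, z3 be pairwise distinct complex numbers with z1, z2 ∉ {0, 1}, and let c0, c1, c2, c3, c4 be complex numbers with c1 ∉ {1/4, −1/4} and c2 ∉ {1/4, −1/4}. Then the 4×4 matrix C(−1) (defined as in the context) is invertible. -/
/-!
The matrix has a vanishing upper-left 2×2 block, so its determinant is the product of the
determinants of the two off-diagonal blocks. Each of these has the shape
`K²(z₂ - z₁)/(αβ)` with `K = 2/(z₁ - z₂)`, and is nonzero because `z₁ ≠ z₂` and the factors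
`2c ± 1/2` and `zᵢ - z₃` do not vanish.
-/

open Matrix

theorem det_fin_four_of_zero_block {R : Type*} [CommRing R] (c d g h i j k l m n o p : R) :
    !![0, 0, c, d; 0, 0, g, h; i, j, k, l; m, n, o, p].det = (c * h - d * g) * (i * n - j * m) := by
  simp [det_succ_row_zero, Fin.sum_univ_succ, Fin.succAbove]
  ring

section Field

variable {F : Type*} [Field F]

theorem scaled_minor_ne_zero {K x y α β : F} (hK : K ≠ 0) (hxy : x ≠ y) (hα : α ≠ 0)
    (hβ : β ≠ 0) : K * x / α * (K / β) - K * y / β * (K / α) ≠ 0 := by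
  have key : K * x / α * (K / β) - K * y / β * (K / α) = K ^ 2 * (x - y) / (α * β) := by
    field_simp
  rw [key]
  exact div_ne_zero (mul_ne_zero (pow_ne_zero 2 hK) (sub_ne_zero.mpr hxy)) (mul_ne_zero hα hβ)

variable [CharZero F] {c : F}

theorem two_mul_add_half_ne_zero (hc : c ≠ -(1 / 4)) : 2 * c + 1 / 2 ≠ 0 :=
  fun h => hc (by linear_combination h / 2)

theorem two_mul_sub_half_ne_zero (hc : c ≠ 1 / 4) : 2 * c - 1 / 2 ≠ 0 :=
  fun h => hc (by linear_combination h / 2)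

end Field

theorem Cm1_invertible_general (z1 z2 z3 c0 c1 c2 c3 c4 : ℂ)
    (h12 : z1 ≠ z2) (h13 : z1 ≠ z3) (h23 : z2 ≠ z3)
    (hc1p : c1 ≠ 1/4) (hc1m : c1 ≠ -(1/4)) (hc2p : c2 ≠ 1/4) (hc2m : c2 ≠ -(1/4)) :
    IsUnit (!![0, 0,
        -((2/(z1-z2))*z1/((2*c1+1/2)*(z1-z3))),
        (2/(z1-z2))*z2/((2*c2+1/2)*(z2-z3));
        0, 0,
        -((2/(z1-z2))/((2*c1+1/2)*(z1-z3))),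
        (2/(z1-z2))/((2*c2+1/2)*(z2-z3));
        -((2/(z1-z2))*z1/((2*c1-1/2)*(z1-z3))),
        -((2/(z1-z2))/((2*c1-1/2)*(z1-z3))),
        (2/(z1-z2))*(1-z1)*z1/((2*c1-1/2)*(2*c1+1/2)*(z1-z3))
          * ((2*c0-2*c1)/z1 + (2*c2+2*c1)/(z1-z2) + (2*c3+2*c1)/(z1-z3) + (2*c1+2*c4)/(z1-1)),
        (2/(z1-z2))*(-1/(z1-z2))
          * (z1*(1-z2)/((2*c1-1/2)*(z1-z3)) + z2*(1-z1)/((2*c2+1/2)*(z2-z3)));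
        (2/(z1-z2))*z2/((2*c2-1/2)*(z2-z3)),
        (2/(z1-z2))/((2*c2-1/2)*(z2-z3)),
        (2/(z1-z2))*(-1/(z1-z2))
          * (z1*(1-z2)/((2*c1+1/2)*(z1-z3)) + z2*(1-z1)/((2*c2-1/2)*(z2-z3))),
        -((2/(z1-z2))*(1-z2)*z2/((2*c2-1/2)*(2*c2+1/2)*(z2-z3)))
          * ((2*c0-2*c2)/z2 + (2*c1+2*c2)/(z2-z1) + (2*c3+2*c2)/(z2-z3) + (2*c2+2*c4)/(z2-1))]) := by
  rw [isUnit_iff_isUnit_det, isUnit_iff_ne_zero, det_fin_four_of_zero_block]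
  have hK : 2 / (z1 - z2) ≠ 0 := div_ne_zero two_ne_zero (sub_ne_zero.mpr h12)
  have h13' := sub_ne_zero.mpr h13
  have h23' := sub_ne_zero.mpr h23
  have upper := scaled_minor_ne_zero hK h12 (mul_ne_zero (two_mul_add_half_ne_zero hc1m) h13')
    (mul_ne_zero (two_mul_add_half_ne_zero hc2m) h23')
  have lower := scaled_minor_ne_zero hK h12 (mul_ne_zero (two_mul_sub_half_ne_zero hc1p) h13')
    (mul_ne_zero (two_mul_sub_half_ne_zero hc2p) h23')
  refine mul_ne_zero ?_ ?_
  · convert neg_ne_zero.mpr upper using 1; ring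
  · convert neg_ne_zero.mpr lower using 1; ring

theorem Cm1_invertible (z1 z2 z3 c0 c1 c2 c3 c4 : ℂ)
    (h12 : z1 ≠ z2) (h13 : z1 ≠ z3) (h23 : z2 ≠ z3)
    (hz1_0 : z1 ≠ 0) (hz1_1 : z1 ≠ 1) (hz2_0 : z2 ≠ 0) (hz2_1 : z2 ≠ 1)
    (hc1p : c1 ≠ 1/4) (hc1m : c1 ≠ -(1/4)) (hc2p : c2 ≠ 1/4) (hc2m : c2 ≠ -(1/4)) :
    IsUnit (!![0, 0,
        -((2/(z1-z2))*z1/((2*c1+1/2)*(z1-z3))),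
        (2/(z1-z2))*z2/((2*c2+1/2)*(z2-z3));
        0, 0,
        -((2/(z1-z2))/((2*c1+1/2)*(z1-z3))),
        (2/(z1-z2))/((2*c2+1/2)*(z2-z3));
        -((2/(z1-z2))*z1/((2*c1-1/2)*(z1-z3))),
        -((2/(z1-z2))/((2*c1-1/2)*(z1-z3))),
        (2/(z1-z2))*(1-z1)*z1/((2*c1-1/2)*(2*c1+1/2)*(z1-z3))
          * ((2*c0-2*c1)/z1 + (2*c2+2*c1)/(z1-z2) + (2*c3+2*c1)/(z1-z3) + (2*c1+2*c4)/(z1-1)),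
        (2/(z1-z2))*(-1/(z1-z2))
          * (z1*(1-z2)/((2*c1-1/2)*(z1-z3)) + z2*(1-z1)/((2*c2+1/2)*(z2-z3)));
        (2/(z1-z2))*z2/((2*c2-1/2)*(z2-z3)),
        (2/(z1-z2))/((2*c2-1/2)*(z2-z3)),
        (2/(z1-z2))*(-1/(z1-z2))
          * (z1*(1-z2)/((2*c1+1/2)*(z1-z3)) + z2*(1-z1)/((2*c2-1/2)*(z2-z3))),
        -((2/(z1-z2))*(1-z2)*z2/((2*c2-1/2)*(2*c2+1/2)*(z2-z3)))
          * ((2*c0-2*c2)/z2 + (2*c1+2*c2)/(z2-z1) + (2*c3+2*c2)/(z2-z3) + (2*c2+2*c4)/(z2-1))]) :=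
  Cm1_invertible_general z1 z2 z3 c0 c1 c2 c3 c4 h12 h13 h23 hc1p hc1m hc2p hc2m
end

section
/- Let x0, x1, x2, x3, x4 be complex numbers, each different from 1. Define the 4×4 complex matrix M by M_{11} = (1−x0·x1)/((1−x0)(1−x1)), M_{12} = 1/(1−x1), M_{13} = M_{14} = 0; M_{21} = x1/(1−x1), M_{22} = (1−x1·x2)/((1−x1)(1−x2)), M_{23} = 1/(1−x2), M_{24} = 0; M_{31} = 0, M_{32} = x2/(1−x2), M_{33} = (1−x2·x3)/((1−x2)(1−x3)), M_{34} = 1/(1−x3); M_{41} = M_{42} = 0, M_{43} = x3/(1−x3), M_{44} = (1−x3·x4)/((1−x3)(1−x4)). Then det M = (1 − x0·x1·x2·x3·x4)/((1−x0)(1−x1)(1−x2)(1−x3)(1−x4)). -/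
/-!
Expanding along the first row, the principal minors `Dₖ` of the tridiagonal matrix on the rows
`k, …, 4` satisfy the continuant recurrence `Dₖ = Mₖₖ Dₖ₊₁ - Mₖ,ₖ₊₁ Mₖ₊₁,ₖ Dₖ₊₂`.
The closed form `(1 - xₖ₋₁ ⋯ x₄) / ((1 - xₖ₋₁) ⋯ (1 - x₄))` satisfies the same recurrence
and agrees with `D₄` and with `D₅ = 1`, hence equals `Dₖ` for all `k`, in particular `k = 1`.
-/

open Matrix

theorem det_fin_four_of_tridiagonal {R : Type*} [CommRing R]
    (a₁ a₂ a₃ a₄ b₁ b₂ b₃ c₁ c₂ c₃ : R) :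
    !![a₁, b₁, 0, 0; c₁, a₂, b₂, 0; 0, c₂, a₃, b₃; 0, 0, c₃, a₄].det
      = a₁ * (a₂ * (a₃ * a₄ - b₃ * c₃) - b₂ * c₂ * a₄) - b₁ * c₁ * (a₃ * a₄ - b₃ * c₃) := by
  simp [det_succ_row_zero, Fin.sum_univ_succ, Fin.succAbove]
  ring

section OneSubProdDivProdOneSub

variable {K : Type*} [Field K]

def oneSubProdDivProdOneSub (xs : List K) : K :=
  (1 - xs.prod) / (xs.map (1 - ·)).prod

@[simp]
theorem oneSubProdDivProdOneSub_singleton {x : K} (hx : x ≠ 1) :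
    oneSubProdDivProdOneSub [x] = 1 := by
  simp [oneSubProdDivProdOneSub, sub_ne_zero.mpr hx.symm]

theorem oneSubProdDivProdOneSub_cons_cons {a b : K} {xs : List K}
    (ha : a ≠ 1) (hb : b ≠ 1) (hxs : ∀ x ∈ xs, x ≠ 1) :
    oneSubProdDivProdOneSub (a :: b :: xs)
      = (1 - a * b) / ((1 - a) * (1 - b)) * oneSubProdDivProdOneSub (b :: xs)
        - 1 / (1 - b) * (b / (1 - b)) * oneSubProdDivProdOneSub xs := by
  have hQ : (xs.map (1 - ·)).prod ≠ 0 :=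
    List.prod_ne_zero fun h ↦ by
      obtain ⟨x, hx, hx0⟩ := List.mem_map.mp h
      exact hxs x hx (sub_eq_zero.mp hx0).symm
  have ha' : 1 - a ≠ 0 := sub_ne_zero.mpr ha.symm
  have hb' : 1 - b ≠ 0 := sub_ne_zero.mpr hb.symm
  simp only [oneSubProdDivProdOneSub, List.prod_cons, List.map_cons]
  field_simp
  ring

end OneSubProdDivProdOneSub

theorem det_tridiagonal (x0 x1 x2 x3 x4 : ℂ)
    (h0 : x0 ≠ 1) (h1 : x1 ≠ 1) (h2 : x2 ≠ 1) (h3 : x3 ≠ 1) (h4 : x4 ≠ 1) :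
    (!![(1-x0*x1)/((1-x0)*(1-x1)), 1/(1-x1), 0, 0;
        x1/(1-x1), (1-x1*x2)/((1-x1)*(1-x2)), 1/(1-x2), 0;
        0, x2/(1-x2), (1-x2*x3)/((1-x2)*(1-x3)), 1/(1-x3);
        0, 0, x3/(1-x3), (1-x3*x4)/((1-x3)*(1-x4))]).det
      = (1 - x0*x1*x2*x3*x4)/((1-x0)*(1-x1)*(1-x2)*(1-x3)*(1-x4)) := by
  have closed_form : (1 - x0*x1*x2*x3*x4)/((1-x0)*(1-x1)*(1-x2)*(1-x3)*(1-x4))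
      = oneSubProdDivProdOneSub [x0, x1, x2, x3, x4] := by
    simp [oneSubProdDivProdOneSub, mul_assoc]
  have corner : (1-x3*x4)/((1-x3)*(1-x4)) = oneSubProdDivProdOneSub [x3, x4] := by
    simp [oneSubProdDivProdOneSub]
  rw [det_fin_four_of_tridiagonal, closed_form,
    oneSubProdDivProdOneSub_cons_cons h0 h1 (by simp [*]),
    oneSubProdDivProdOneSub_cons_cons h1 h2 (by simp [*]),
    oneSubProdDivProdOneSub_cons_cons h2 h3 (by simp [*]),
    oneSubProdDivProdOneSub_singleton h4, ← corner]
  ring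
end

section
/- Write e(u) := exp(2π√(−1)·u) for u ∈ ℂ. Let c0, c1, c2, c3, c4, c5 be complex numbers with c0+c1+c2+c3+c4+c5 = 0 and 2c_j ∉ ℤ for j = 0, 1, 2, 3, 4. Define the 4×4 matrix H(1) by H(1)_{jj} = (1−e(2c_{j-1}+2c_j))/((1−e(2c_{j-1}))(1−e(2c_j))) for j = 1, 2, 3, 4 (i.e., diagonal entries involve the consecutive pairs (c0,c1), (c1,c2), (c2,c3), (c3,c4)), superdiagonal entries H(1)_{j,j+1} = 1/(1−e(2c_j)), subdiagonal entries H(1)_{j+1,j} = e(2c_j)/(1−e(2c_j)) for j = 1, 2, 3, and all other entries 0. Then det H(1) = (1 − e(−2c5))/((1−e(2c0))(1−e(2c1))(1−e(2c2))(1−e(2c3))(1−e(2c4))). -/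
open Matrix Complex

lemma one_sub_exp_ne (c : ℂ) (h : ∀ n : ℤ, 2*c ≠ (n : ℂ)) :
    1 - exp (2*Real.pi*I*(2*c)) ≠ 0 := by
  intro hc
  have : exp (2*Real.pi*I*(2*c)) = 1 := by linear_combination -hc
  rw [Complex.exp_eq_one_iff] at this
  obtain ⟨n, hn⟩ := this
  apply h n
  have hπ : (Real.pi : ℂ) ≠ 0 := by exact_mod_cast Real.pi_ne_zero
  have hpi : (2*Real.pi*I : ℂ) ≠ 0 := mul_ne_zero (mul_ne_zero two_ne_zero hπ) Complex.I_ne_zero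
  apply mul_left_cancel₀ hpi
  rw [hn]; ring

set_option maxHeartbeats 1000000 in
lemma det_aux (x0 x1 x2 x3 x4 : ℂ) (n0 : 1-x0 ≠ 0) (n1 : 1-x1 ≠ 0)
    (n2 : 1-x2 ≠ 0) (n3 : 1-x3 ≠ 0) (n4 : 1-x4 ≠ 0) :
    (!![(1-x0*x1)/((1-x0)*(1-x1)), 1/(1-x1), 0, 0;
        x1/(1-x1), (1-x1*x2)/((1-x1)*(1-x2)), 1/(1-x2), 0;
        0, x2/(1-x2), (1-x2*x3)/((1-x2)*(1-x3)), 1/(1-x3);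
        0, 0, x3/(1-x3), (1-x3*x4)/((1-x3)*(1-x4))]).det
      = (1-x0*x1*x2*x3*x4)/((1-x0)*(1-x1)*(1-x2)*(1-x3)*(1-x4)) := by
  set H : Matrix (Fin 4) (Fin 4) ℂ :=
    !![(1-x0*x1)/((1-x0)*(1-x1)), 1/(1-x1), 0, 0;
        x1/(1-x1), (1-x1*x2)/((1-x1)*(1-x2)), 1/(1-x2), 0;
        0, x2/(1-x2), (1-x2*x3)/((1-x2)*(1-x3)), 1/(1-x3);
        0, 0, x3/(1-x3), (1-x3*x4)/((1-x3)*(1-x4))] with hH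
  have hM : (Matrix.diagonal ![(1-x0)*(1-x1), (1-x1)*(1-x2), (1-x2)*(1-x3), (1-x3)*(1-x4)]) * H
      = !![1-x0*x1, 1-x0, 0, 0;
           x1*(1-x2), 1-x1*x2, 1-x1, 0;
           0, x2*(1-x3), 1-x2*x3, 1-x2;
           0, 0, x3*(1-x4), 1-x3*x4] := by
    ext i j
    rw [Matrix.diagonal_mul]
    fin_cases i <;> fin_cases j <;>
      (try simp [hH, Matrix.vecHead, Matrix.vecTail]) <;> (try field_simp) <;> (try ring)
  have hdet := congrArg Matrix.det hM
  rw [Matrix.det_mul, Matrix.det_diagonal, Fin.prod_univ_four] at hdet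
  have hR : (!![1-x0*x1, 1-x0, 0, 0;
           x1*(1-x2), 1-x1*x2, 1-x1, 0;
           0, x2*(1-x3), 1-x2*x3, 1-x2;
           0, 0, x3*(1-x4), 1-x3*x4] : Matrix (Fin 4) (Fin 4) ℂ).det
      = (1-x0*x1*x2*x3*x4)*((1-x1)*(1-x2)*(1-x3)) := by
    simp [Matrix.det_succ_row_zero, Fin.sum_univ_succ, Fin.succAbove]
    ring
  rw [hR] at hdet
  simp only [Matrix.cons_val_zero, Matrix.cons_val_one, Matrix.head_cons,
    Matrix.cons_val_two, Matrix.tail_cons, Matrix.cons_val_three] at hdet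
  rw [eq_div_iff (by apply_rules [mul_ne_zero] :
      (1-x0)*(1-x1)*(1-x2)*(1-x3)*(1-x4) ≠ (0:ℂ))]
  apply mul_left_cancel₀ (mul_ne_zero (mul_ne_zero n1 n2) n3)
  linear_combination hdet

theorem det_H1 (c0 c1 c2 c3 c4 c5 : ℂ)
    (hsum : c0 + c1 + c2 + c3 + c4 + c5 = 0)
    (h0 : ∀ n : ℤ, 2*c0 ≠ (n : ℂ)) (h1 : ∀ n : ℤ, 2*c1 ≠ (n : ℂ))
    (h2 : ∀ n : ℤ, 2*c2 ≠ (n : ℂ)) (h3 : ∀ n : ℤ, 2*c3 ≠ (n : ℂ))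
    (h4 : ∀ n : ℤ, 2*c4 ≠ (n : ℂ)) :
    (!![(1-exp (2*Real.pi*I*(2*c0+2*c1)))/((1-exp (2*Real.pi*I*(2*c0)))*(1-exp (2*Real.pi*I*(2*c1)))),
        1/(1-exp (2*Real.pi*I*(2*c1))), 0, 0;
        exp (2*Real.pi*I*(2*c1))/(1-exp (2*Real.pi*I*(2*c1))),
        (1-exp (2*Real.pi*I*(2*c1+2*c2)))/((1-exp (2*Real.pi*I*(2*c1)))*(1-exp (2*Real.pi*I*(2*c2)))),
        1/(1-exp (2*Real.pi*I*(2*c2))), 0;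
        0, exp (2*Real.pi*I*(2*c2))/(1-exp (2*Real.pi*I*(2*c2))),
        (1-exp (2*Real.pi*I*(2*c2+2*c3)))/((1-exp (2*Real.pi*I*(2*c2)))*(1-exp (2*Real.pi*I*(2*c3)))),
        1/(1-exp (2*Real.pi*I*(2*c3)));
        0, 0, exp (2*Real.pi*I*(2*c3))/(1-exp (2*Real.pi*I*(2*c3))),
        (1-exp (2*Real.pi*I*(2*c3+2*c4)))/((1-exp (2*Real.pi*I*(2*c3)))*(1-exp (2*Real.pi*I*(2*c4))))]).det
      = (1 - exp (2*Real.pi*I*(-2*c5))) /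
        ((1-exp (2*Real.pi*I*(2*c0)))*(1-exp (2*Real.pi*I*(2*c1)))*(1-exp (2*Real.pi*I*(2*c2)))
          *(1-exp (2*Real.pi*I*(2*c3)))*(1-exp (2*Real.pi*I*(2*c4)))) := by
  have e01 : exp (2*Real.pi*I*(2*c0+2*c1)) = exp (2*Real.pi*I*(2*c0)) * exp (2*Real.pi*I*(2*c1)) := by
    rw [← Complex.exp_add]; ring_nf
  have e12 : exp (2*Real.pi*I*(2*c1+2*c2)) = exp (2*Real.pi*I*(2*c1)) * exp (2*Real.pi*I*(2*c2)) := by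
    rw [← Complex.exp_add]; ring_nf
  have e23 : exp (2*Real.pi*I*(2*c2+2*c3)) = exp (2*Real.pi*I*(2*c2)) * exp (2*Real.pi*I*(2*c3)) := by
    rw [← Complex.exp_add]; ring_nf
  have e34 : exp (2*Real.pi*I*(2*c3+2*c4)) = exp (2*Real.pi*I*(2*c3)) * exp (2*Real.pi*I*(2*c4)) := by
    rw [← Complex.exp_add]; ring_nf
  have e5 : exp (2*Real.pi*I*(-2*c5)) = exp (2*Real.pi*I*(2*c0)) * exp (2*Real.pi*I*(2*c1))
      * exp (2*Real.pi*I*(2*c2)) * exp (2*Real.pi*I*(2*c3)) * exp (2*Real.pi*I*(2*c4)) := by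
    rw [← Complex.exp_add, ← Complex.exp_add, ← Complex.exp_add, ← Complex.exp_add]
    congr 1
    have : c5 = -(c0+c1+c2+c3+c4) := by linear_combination hsum
    rw [this]; ring
  rw [e01, e12, e23, e34, e5]
  exact det_aux _ _ _ _ _ (one_sub_exp_ne c0 h0) (one_sub_exp_ne c1 h1)
    (one_sub_exp_ne c2 h2) (one_sub_exp_ne c3 h3) (one_sub_exp_ne c4 h4)
end

section
/- Write e(u) := exp(2π√(−1)·u) for u ∈ ℂ. Let c0, c1, c2, c3, c4, c5 be complex numbers with c0+c1+c2+c3+c4+c5 = 0 and 2c_j ∉ ℤ + 1/2 for j = 0, 1, 2, 3, 4. Define the 4×4 matrix H(−1) by diagonal entries H(−1)_{jj} = (1−e(2c_{j-1}+2c_j))/((1+e(2c_{j-1}))(1+e(2c_j))) for the consecutive pairs (c0,c1), (c1,c2), (c2,c3), (c3,c4); superdiagonal entries H(−1)_{j,j+1} = 1/(1+e(2c_j)); subdiagonal entries H(−1)_{j+1,j} = −e(2c_j)/(1+e(2c_j)) for j = 1, 2, 3; and all other entries 0. Then det H(−1) = (1 + e(−2c5))/((1+e(2c0))(1+e(2c1))(1+e(2c2))(1+e(2c3))(1+e(2c4))).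 -/
/-! With `x_j = e(2c_j)` we have `e(2c_{j-1} + 2c_j) = x_{j-1} x_j`, and since the `c_j` sum to
zero, `e(-2c₅) = x₀x₁x₂x₃x₄`. The claim is thus a rational-function identity in `x₀, …, x₄`,
valid wherever no `1 + x_j` vanishes, and `2c_j ∉ ℤ + 1/2` says precisely that `x_j ≠ -1`. -/

open Matrix Complex

theorem exp_two_pi_I_mul_add (u v : ℂ) :
    exp (2 * Real.pi * I * (u + v)) = exp (2 * Real.pi * I * u) * exp (2 * Real.pi * I * v) := by
  rw [mul_add, exp_add]

theorem one_add_exp_two_pi_I_mul_ne_zero {u : ℂ} (hu : ∀ n : ℤ, u ≠ n + 1 / 2) :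
    1 + exp (2 * Real.pi * I * u) ≠ 0 := by
  intro h
  obtain ⟨n, hn⟩ := exp_eq_exp_iff_exists_int.mp
    ((eq_neg_of_add_eq_zero_right h).trans exp_pi_mul_I.symm)
  refine hu n (mul_left_cancel₀ (by simp [Real.pi_ne_zero] : 2 * (Real.pi : ℂ) * I ≠ 0) ?_)
  linear_combination hn

theorem det_tridiagonal_one_add {K : Type*} [Field K] (a b c d e : K) (ha : 1 + a ≠ 0)
    (hb : 1 + b ≠ 0) (hc : 1 + c ≠ 0) (hd : 1 + d ≠ 0) (he : 1 + e ≠ 0) :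
    (!![(1 - a * b) / ((1 + a) * (1 + b)), 1 / (1 + b), 0, 0;
        -b / (1 + b), (1 - b * c) / ((1 + b) * (1 + c)), 1 / (1 + c), 0;
        0, -c / (1 + c), (1 - c * d) / ((1 + c) * (1 + d)), 1 / (1 + d);
        0, 0, -d / (1 + d), (1 - d * e) / ((1 + d) * (1 + e))]).det
      = (1 + a * b * c * d * e) / ((1 + a) * (1 + b) * (1 + c) * (1 + d) * (1 + e)) := by
  simp only [det_succ_row_zero, Fin.sum_univ_succ, det_unique, of_apply, submatrix_apply, cons_val,
    Fin.succAbove, Fin.default_eq_zero, Fin.coe_ofNat_eq_mod, Fin.reduceSucc, Fin.reduceCastSucc,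
    Fin.reduceLT, ↓reduceIte]
  field_simp
  ring

theorem det_Hm1 (c0 c1 c2 c3 c4 c5 : ℂ)
    (hsum : c0 + c1 + c2 + c3 + c4 + c5 = 0)
    (h0 : ∀ n : ℤ, 2*c0 ≠ (n : ℂ) + 1/2) (h1 : ∀ n : ℤ, 2*c1 ≠ (n : ℂ) + 1/2)
    (h2 : ∀ n : ℤ, 2*c2 ≠ (n : ℂ) + 1/2) (h3 : ∀ n : ℤ, 2*c3 ≠ (n : ℂ) + 1/2)
    (h4 : ∀ n : ℤ, 2*c4 ≠ (n : ℂ) + 1/2) :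
    (!![(1-exp (2*Real.pi*I*(2*c0+2*c1)))/((1+exp (2*Real.pi*I*(2*c0)))*(1+exp (2*Real.pi*I*(2*c1)))),
        1/(1+exp (2*Real.pi*I*(2*c1))), 0, 0;
        -exp (2*Real.pi*I*(2*c1))/(1+exp (2*Real.pi*I*(2*c1))),
        (1-exp (2*Real.pi*I*(2*c1+2*c2)))/((1+exp (2*Real.pi*I*(2*c1)))*(1+exp (2*Real.pi*I*(2*c2)))),
        1/(1+exp (2*Real.pi*I*(2*c2))), 0;
        0, -exp (2*Real.pi*I*(2*c2))/(1+exp (2*Real.pi*I*(2*c2))),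
        (1-exp (2*Real.pi*I*(2*c2+2*c3)))/((1+exp (2*Real.pi*I*(2*c2)))*(1+exp (2*Real.pi*I*(2*c3)))),
        1/(1+exp (2*Real.pi*I*(2*c3)));
        0, 0, -exp (2*Real.pi*I*(2*c3))/(1+exp (2*Real.pi*I*(2*c3))),
        (1-exp (2*Real.pi*I*(2*c3+2*c4)))/((1+exp (2*Real.pi*I*(2*c3)))*(1+exp (2*Real.pi*I*(2*c4))))]).det
      = (1 + exp (2*Real.pi*I*(-2*c5))) /
        ((1+exp (2*Real.pi*I*(2*c0)))*(1+exp (2*Real.pi*I*(2*c1)))*(1+exp (2*Real.pi*I*(2*c2)))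
          *(1+exp (2*Real.pi*I*(2*c3)))*(1+exp (2*Real.pi*I*(2*c4)))) := by
  have hc5 : -2 * c5 = 2 * c0 + 2 * c1 + 2 * c2 + 2 * c3 + 2 * c4 := by
    linear_combination (-2) * hsum
  simp only [hc5, exp_two_pi_I_mul_add]
  exact det_tridiagonal_one_add _ _ _ _ _
    (one_add_exp_two_pi_I_mul_ne_zero h0) (one_add_exp_two_pi_I_mul_ne_zero h1)
    (one_add_exp_two_pi_I_mul_ne_zero h2) (one_add_exp_two_pi_I_mul_ne_zero h3)
    (one_add_exp_two_pi_I_mul_ne_zero h4)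
end

section
/- Write e(u) := exp(2π√(−1)·u) for u ∈ ℂ. Let c0, c1, c2, c3, c4, c5 be complex numbers with c0+c1+c2+c3+c4+c5 = 0 and 4c_j ∉ ℤ for all j = 0, 1, 2, 3, 4, 5. Then the 8×8 block-diagonal complex matrix H = (1/2)·diag(H(1), H(−1)) is invertible, where H(1) is the 4×4 matrix with diagonal entries (1−e(2c_{j-1}+2c_j))/((1−e(2c_{j-1}))(1−e(2c_j))) for consecutive pairs (c0,c1), (c1,c2), (c2,c3), (c3,c4), superdiagonal entries 1/(1−e(2c_j)), subdiagonal entries e(2c_j)/(1−e(2c_j)) (j = 1, 2, 3) and zeros elsewhere, and H(−1) is obtained from H(1) by replacing e(2c_j) with −e(2c_j) everywhere. -/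
open Matrix Complex

/-!
Writing `b j = ε e(2c_j)` with `ε = ±1`, the block `H(ε)` becomes the tridiagonal matrix
`intersectionBlock b`, whose determinant is `(1 - b 0 ⋯ b 4) / ∏ (1 - b j)`. Since `4c_j ∉ ℤ` we have
`e(2c_j) ≠ ±1`, and since `∑ c_j = 0` we have `b 0 ⋯ b 4 = ε / e(2c_5) ≠ 1`.
-/

section IntersectionBlock

variable {K : Type*} [Field K]

def intersectionBlock (b : Fin 5 → K) : Matrix (Fin 4) (Fin 4) K :=
  !![(1 - b 0 * b 1) / ((1 - b 0) * (1 - b 1)), 1 / (1 - b 1), 0, 0;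
     b 1 / (1 - b 1), (1 - b 1 * b 2) / ((1 - b 1) * (1 - b 2)), 1 / (1 - b 2), 0;
     0, b 2 / (1 - b 2), (1 - b 2 * b 3) / ((1 - b 2) * (1 - b 3)), 1 / (1 - b 3);
     0, 0, b 3 / (1 - b 3), (1 - b 3 * b 4) / ((1 - b 3) * (1 - b 4))]

theorem det_intersectionBlock {b : Fin 5 → K} (hb : ∀ j, b j ≠ 1) :
    (intersectionBlock b).det = (1 - ∏ j, b j) / ∏ j, (1 - b j) := by
  have h : ∀ j, 1 - b j ≠ 0 := fun j => sub_ne_zero.mpr (hb j).symm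
  have := h 0; have := h 1; have := h 2; have := h 3; have := h 4
  simp [intersectionBlock, det_succ_row_zero, Fin.sum_univ_succ, Fin.prod_univ_succ, Fin.succAbove]
  field_simp
  ring

theorem det_intersectionBlock_ne_zero {b : Fin 5 → K} (hb : ∀ j, b j ≠ 1)
    (hprod : ∏ j, b j ≠ 1) : (intersectionBlock b).det ≠ 0 := by
  rw [det_intersectionBlock hb]
  exact div_ne_zero (sub_ne_zero.mpr hprod.symm)
    (Finset.prod_ne_zero_iff.mpr fun j _ => sub_ne_zero.mpr (hb j).symm)

theorem det_intersectionBlock_sign_mul_ne_zero {x : Fin 6 → K}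
    (hprod : ∏ j, x j = 1) {ε : K} (hε : ε ^ 2 = 1) (hx : ∀ j, x j ≠ ε) :
    (intersectionBlock fun j => ε * x j.castSucc).det ≠ 0 := by
  have hεε : ∀ y : K, ε * (ε * y) = y := fun y => by linear_combination y * hε
  refine det_intersectionBlock_ne_zero (fun j h => hx j.castSucc ?_) fun h => hx (Fin.last 5) ?_
  · simpa [h] using (hεε (x j.castSucc)).symm
  · rw [Finset.prod_mul_distrib, Fin.prod_const] at h
    rw [Fin.prod_univ_castSucc] at hprod
    linear_combination (-x (Fin.last 5)) * h + ε ^ 5 * hprod + ε * (ε ^ 2 + 1) * hε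

end IntersectionBlock

theorem isUnit_smul_fromBlocks_zero {K : Type*} [Field K] {m n : Type*} [Fintype m] [DecidableEq m]
    [Fintype n] [DecidableEq n] {c : K} (hc : c ≠ 0) {A : Matrix m m K} {B : Matrix n n K}
    (hA : A.det ≠ 0) (hB : B.det ≠ 0) : IsUnit (c • fromBlocks A 0 0 B) := by
  rw [isUnit_iff_isUnit_det, det_smul, det_fromBlocks_zero₂₁, isUnit_iff_ne_zero]
  exact mul_ne_zero (pow_ne_zero _ hc) (mul_ne_zero hA hB)

theorem cexp_two_pi_I_mul_two_mul_sq_ne_one {c : ℂ} (hc : ∀ n : ℤ, 4 * c ≠ n) :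
    exp (2 * Real.pi * I * (2 * c)) ^ 2 ≠ 1 := by
  rw [← Complex.exp_nat_mul, Ne, Complex.exp_eq_one_iff]
  rintro ⟨n, hn⟩
  refine hc n (mul_right_cancel₀ (by simp [Real.pi_ne_zero] : 2 * (Real.pi : ℂ) * I ≠ 0) ?_)
  linear_combination hn

theorem H_invertible (c0 c1 c2 c3 c4 c5 : ℂ)
    (hsum : c0 + c1 + c2 + c3 + c4 + c5 = 0)
    (h0 : ∀ n : ℤ, 4*c0 ≠ (n : ℂ)) (h1 : ∀ n : ℤ, 4*c1 ≠ (n : ℂ))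
    (h2 : ∀ n : ℤ, 4*c2 ≠ (n : ℂ)) (h3 : ∀ n : ℤ, 4*c3 ≠ (n : ℂ))
    (h4 : ∀ n : ℤ, 4*c4 ≠ (n : ℂ)) (h5 : ∀ n : ℤ, 4*c5 ≠ (n : ℂ)) :
    IsUnit (((1:ℂ)/2) • Matrix.fromBlocks
      (!![(1-exp (2*Real.pi*I*(2*c0+2*c1)))/((1-exp (2*Real.pi*I*(2*c0)))*(1-exp (2*Real.pi*I*(2*c1)))),
          1/(1-exp (2*Real.pi*I*(2*c1))), 0, 0;
          exp (2*Real.pi*I*(2*c1))/(1-exp (2*Real.pi*I*(2*c1))),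
          (1-exp (2*Real.pi*I*(2*c1+2*c2)))/((1-exp (2*Real.pi*I*(2*c1)))*(1-exp (2*Real.pi*I*(2*c2)))),
          1/(1-exp (2*Real.pi*I*(2*c2))), 0;
          0, exp (2*Real.pi*I*(2*c2))/(1-exp (2*Real.pi*I*(2*c2))),
          (1-exp (2*Real.pi*I*(2*c2+2*c3)))/((1-exp (2*Real.pi*I*(2*c2)))*(1-exp (2*Real.pi*I*(2*c3)))),
          1/(1-exp (2*Real.pi*I*(2*c3)));
          0, 0, exp (2*Real.pi*I*(2*c3))/(1-exp (2*Real.pi*I*(2*c3))),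
          (1-exp (2*Real.pi*I*(2*c3+2*c4)))/((1-exp (2*Real.pi*I*(2*c3)))*(1-exp (2*Real.pi*I*(2*c4))))])
      (0 : Matrix (Fin 4) (Fin 4) ℂ) (0 : Matrix (Fin 4) (Fin 4) ℂ)
      (!![(1-exp (2*Real.pi*I*(2*c0+2*c1)))/((1+exp (2*Real.pi*I*(2*c0)))*(1+exp (2*Real.pi*I*(2*c1)))),
          1/(1+exp (2*Real.pi*I*(2*c1))), 0, 0;
          -exp (2*Real.pi*I*(2*c1))/(1+exp (2*Real.pi*I*(2*c1))),
          (1-exp (2*Real.pi*I*(2*c1+2*c2)))/((1+exp (2*Real.pi*I*(2*c1)))*(1+exp (2*Real.pi*I*(2*c2)))),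
          1/(1+exp (2*Real.pi*I*(2*c2))), 0;
          0, -exp (2*Real.pi*I*(2*c2))/(1+exp (2*Real.pi*I*(2*c2))),
          (1-exp (2*Real.pi*I*(2*c2+2*c3)))/((1+exp (2*Real.pi*I*(2*c2)))*(1+exp (2*Real.pi*I*(2*c3)))),
          1/(1+exp (2*Real.pi*I*(2*c3)));
          0, 0, -exp (2*Real.pi*I*(2*c3))/(1+exp (2*Real.pi*I*(2*c3))),
          (1-exp (2*Real.pi*I*(2*c3+2*c4)))/((1+exp (2*Real.pi*I*(2*c3)))*(1+exp (2*Real.pi*I*(2*c4))))])) := by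
  set x : Fin 6 → ℂ := fun j => exp (2 * Real.pi * I * (2 * ![c0, c1, c2, c3, c4, c5] j)) with hx_def
  have hprod : ∏ j, x j = 1 := by
    rw [hx_def, ← Complex.exp_sum, ← Finset.mul_sum, ← Finset.mul_sum]
    simp [Fin.sum_univ_succ, ← add_assoc, hsum]
  have hx : ∀ j, x j ^ 2 ≠ 1 := by
    intro j
    fin_cases j <;> exact cexp_two_pi_I_mul_two_mul_sq_ne_one ‹_›
  have hA := det_intersectionBlock_sign_mul_ne_zero hprod (one_pow 2)
    fun j h => hx j (by rw [h, one_pow])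
  have hB := det_intersectionBlock_sign_mul_ne_zero hprod (by norm_num : (-1 : ℂ) ^ 2 = 1)
    fun j h => hx j (by rw [h]; norm_num)
  convert isUnit_smul_fromBlocks_zero (by norm_num : (1 : ℂ) / 2 ≠ 0) hA hB using 3 <;>
    ext i j <;> fin_cases i <;> fin_cases j <;>
    simp [intersectionBlock, x, mul_add, Complex.exp_add]
end
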